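/- Let T and T' be products of two orthogonal projections, T = P_T P_{T*} and T' = P_{T'} P_{T'*}, where P_T, P_{T*} denote the orthogonal projections onto the closures of range(T) and range(T*) (and similarly for T'). If closure(range T) ⊆ closure(range T') and closure(range T*) ⊆ closure(range T'*), then T T* T = T (T')* T, i.e., T is below T' in the diamond order whenever additionally range(T) ⊆ range(T') and range(T*) ⊆ range(T'*). -/

import Mathlib

/-! Write `T = P Q` with `P`, `Q` the projections onto the closed ranges of `T` and `T*`, so that
`T* = Q P` and `T T* T = P Q P Q`. The range inclusions give `P' P = P` and `Q Q' = Q`, hence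
`T T'* T = P Q (Q' P') P Q = P Q P Q` as well. -/

open ContinuousLinearMap

/-- The orthogonal projection onto the closure of the range of `A`. -/
noncomputable def projCR {E F : Type*} [NormedAddCommGroup E] [InnerProductSpace ℂ E]
    [NormedAddCommGroup F] [InnerProductSpace ℂ F] [CompleteSpace F]
    (A : E →L[ℂ] F) : F →L[ℂ] F :=
  (LinearMap.range (A : E →ₗ[ℂ] F)).topologicalClosure.subtypeL ∘L
    Submodule.orthogonalProjectionOnto (LinearMap.range (A : E →ₗ[ℂ] F)).topologicalClosure

theorem mul_star_mul_eq_of_eq_mul {R : Type*} [Monoid R] [StarMul R] {t t' p q p' q' : R}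
    (hp : IsStarProjection p) (hq : IsStarProjection q)
    (hp' : IsSelfAdjoint p') (hq' : IsSelfAdjoint q')
    (ht : t = p * q) (ht' : t' = p' * q')
    (hp'p : p' * p = p) (hqq' : q * q' = q) :
    t * (star t * t) = t * (star t' * t) := by
  subst ht ht'
  simp only [star_mul, hp.isSelfAdjoint.star_eq, hq.isSelfAdjoint.star_eq, hp'.star_eq,
    hq'.star_eq]
  calc p * q * (q * p * (p * q)) = p * (q * q) * (p * p) * q := by noncomm_ring
    _ = p * (q * q') * (p' * p) * q := by rw [hq.isIdempotentElem.eq, hp.isIdempotentElem.eq,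
        hqq', hp'p]
    _ = p * q * (q' * p' * (p * q)) := by noncomm_ring

section projCR

variable {E F G : Type*} [NormedAddCommGroup E] [InnerProductSpace ℂ E]
  [NormedAddCommGroup F] [InnerProductSpace ℂ F] [CompleteSpace F]
  [NormedAddCommGroup G] [InnerProductSpace ℂ G]

theorem projCR_eq_starProjection (A : E →L[ℂ] F) :
    projCR A = (LinearMap.range (A : E →ₗ[ℂ] F)).topologicalClosure.starProjection :=
  rfl

theorem isStarProjection_projCR (A : E →L[ℂ] F) : IsStarProjection (projCR A) := by
  rw [projCR_eq_starProjection]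
  exact isStarProjection_starProjection

theorem projCR_comp_projCR_of_le {A : E →L[ℂ] F} {B : G →L[ℂ] F}
    (h : (LinearMap.range (A : E →ₗ[ℂ] F)).topologicalClosure ≤
      (LinearMap.range (B : G →ₗ[ℂ] F)).topologicalClosure) :
    projCR A ∘L projCR B = projCR A :=
  Submodule.starProjection_comp_starProjection_of_le h

theorem projCR_comp_projCR_of_le' {A : E →L[ℂ] F} {B : G →L[ℂ] F}
    (h : (LinearMap.range (A : E →ₗ[ℂ] F)).topologicalClosure ≤
      (LinearMap.range (B : G →ₗ[ℂ] F)).topologicalClosure) :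
    projCR B ∘L projCR A = projCR A := by
  simpa only [adjoint_comp, (isStarProjection_projCR A).isSelfAdjoint.adjoint_eq,
    (isStarProjection_projCR B).isSelfAdjoint.adjoint_eq]
    using congrArg adjoint (projCR_comp_projCR_of_le h)

end projCR

theorem stmt17 {H : Type*} [NormedAddCommGroup H] [InnerProductSpace ℂ H] [CompleteSpace H]
    (T T' : H →L[ℂ] H)
    (hT : T = (projCR T) ∘L (projCR (adjoint T)))
    (hT' : T' = (projCR T') ∘L (projCR (adjoint T')))
    (h1 : (LinearMap.range (T : H →ₗ[ℂ] H)).topologicalClosure ≤ (LinearMap.range (T' : H →ₗ[ℂ] H)).topologicalClosure)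
    (h2 : (LinearMap.range ((adjoint T : H →L[ℂ] H) : H →ₗ[ℂ] H)).topologicalClosure ≤
      (LinearMap.range ((adjoint T' : H →L[ℂ] H) : H →ₗ[ℂ] H)).topologicalClosure) :
    T ∘L ((adjoint T) ∘L T) = T ∘L ((adjoint T') ∘L T) :=
  mul_star_mul_eq_of_eq_mul (isStarProjection_projCR T) (isStarProjection_projCR _)
    (isStarProjection_projCR T').isSelfAdjoint (isStarProjection_projCR _).isSelfAdjoint
    hT hT' (projCR_comp_projCR_of_le' h1) (projCR_comp_projCR_of_le h2)
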